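/- Let a ≥ 1, let m ≥ 1 be an integer and let t ≥ 0. Then the series ∑_{ℓ=m}^{∞} ℓ·G_m^ℓ(t) converges and ∑_{ℓ=m}^{∞} ℓ·G_m^ℓ(t) ≤ m·a·e^{a t}. -/

import Mathlib

/-- Auxiliary recursion for `G_m^ℓ`, indexed by the gap `k = ℓ - m`:
`Ggap a 0 m t = e^{-amt}` and
`Ggap a (k+1) m t = a m ∫₀ᵗ e^{-am(t-s)} Ggap a k (m+1) s ds`. -/
noncomputable def Ggap (a : ℝ) : ℕ → ℕ → ℝ → ℝ
  | 0, m, t => Real.exp (-a * (m : ℝ) * t)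
  | k + 1, m, t => a * (m : ℝ) *
      ∫ s in (0 : ℝ)..t, Real.exp (-a * (m : ℝ) * (t - s)) * Ggap a k (m + 1) s

/-- `G_m^ℓ(t)` for `m ≤ ℓ`:
`G_ℓ^ℓ(t) = e^{-aℓt}` and `G_m^ℓ(t) = am ∫₀ᵗ e^{-am(t-s)} G_{m+1}^ℓ(s) ds`. -/
noncomputable def Ghier (a : ℝ) (m ℓ : ℕ) (t : ℝ) : ℝ := Ggap a (ℓ - m) m t

/-!
Solving the recursion gives the closed form
`G_m^{m+k}(t) = C(m+k-1, k) e^{-amt} (1 - e^{-at})^k`: each step integrates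
`a e^{-as} (1 - e^{-as})^k`, the derivative of `(1 - e^{-as})^{k+1} / (k+1)`.
Hence `ℓ G_m^ℓ(t) = m C(ℓ, m) e^{-amt} x^{ℓ-m}` with `x = 1 - e^{-at} ∈ [0, 1)`, and the negative
binomial series `∑ₖ C(k+m, m) xᵏ = (1 - x)^{-(m+1)} = e^{a(m+1)t}` sums these terms exactly
to `m e^{at}`.
-/

open Real

theorem mul_integral_exp_mul_one_sub_exp_pow (a t : ℝ) (k : ℕ) :
    a * ∫ s in (0 : ℝ)..t, exp (-a * s) * (1 - exp (-a * s)) ^ k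
      = (1 - exp (-a * t)) ^ (k + 1) / (k + 1) := by
  have hderiv (s : ℝ) : HasDerivAt (fun u => (1 - exp (-a * u)) ^ (k + 1) / (k + 1))
      (a * (exp (-a * s) * (1 - exp (-a * s)) ^ k)) s := by
    refine ((((hasDerivAt_id s).const_mul (-a)).exp.const_sub 1).pow (k + 1)).div_const
      ((k : ℝ) + 1) |>.congr_deriv ?_
    simp only [id, Nat.add_sub_cancel]
    field_simp
    push_cast
    ring
  rw [← intervalIntegral.integral_const_mul,
    intervalIntegral.integral_eq_sub_of_hasDerivAt (fun s _ => hderiv s)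
      (Continuous.intervalIntegrable (by fun_prop) 0 t)]
  simp

/-- The truncated `m + k - 1` also covers `m = 0`, where `(k - 1).choose k = 0` for `k ≥ 1`. -/
theorem Ggap_eq_choose_mul_exp_mul_pow (a : ℝ) (k m : ℕ) (t : ℝ) :
    Ggap a k m t = (m + k - 1).choose k * exp (-a * m * t) * (1 - exp (-a * t)) ^ k := by
  induction k generalizing m t with
  | zero => simp [Ggap]
  | succ k ih =>
    have hintegrand : (fun s => exp (-a * m * (t - s)) * Ggap a k (m + 1) s) =
        fun s => (m + k).choose k * exp (-a * m * t) * (exp (-a * s) * (1 - exp (-a * s)) ^ k) := by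
      funext s
      have hexp : exp (-a * m * (t - s)) * exp (-a * (m + 1) * s)
          = exp (-a * m * t) * exp (-a * s) := by
        rw [← exp_add, ← exp_add]; ring_nf
      rw [ih, Nat.add_right_comm, Nat.add_sub_cancel]
      push_cast
      linear_combination ((m + k).choose k * (1 - exp (-a * s)) ^ k) * hexp
    have hchoose : ((m + k).choose (k + 1) : ℝ) * (k + 1) = m * (m + k).choose k := by
      exact_mod_cast (Nat.choose_succ_right_eq (m + k) k).trans
        (by rw [Nat.add_sub_cancel, Nat.mul_comm])
    have hintegral := mul_integral_exp_mul_one_sub_exp_pow a t k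
    rw [eq_div_iff (by positivity)] at hintegral
    show a * m * ∫ s in (0 : ℝ)..t, exp (-a * m * (t - s)) * Ggap a k (m + 1) s = _
    rw [hintegrand, intervalIntegral.integral_const_mul, ← Nat.add_assoc, Nat.add_sub_cancel]
    linear_combination ((m + k).choose (k + 1) * exp (-a * m * t)) * hintegral
      - (exp (-a * m * t) * a * ∫ s in (0 : ℝ)..t, exp (-a * s) * (1 - exp (-a * s)) ^ k) * hchoose

theorem Nat.add_mul_choose_add_sub_one (m k : ℕ) :
    (m + k) * (m + k - 1).choose k = m * (k + m).choose m := by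
  rcases m with _ | n
  · rcases k with _ | k <;> simp
  · rw [Nat.add_right_comm n 1 k, Nat.add_sub_cancel, ← Nat.choose_symm_add,
      Nat.add_one_mul_choose_eq, Nat.mul_comm, Nat.add_comm k, Nat.add_right_comm]

theorem natCast_add_mul_Ghier_add (a : ℝ) (m k : ℕ) (t : ℝ) :
    ((m + k : ℕ) : ℝ) * Ghier a m (m + k) t
      = m * exp (-a * m * t) * ((k + m).choose m * (1 - exp (-a * t)) ^ k) := by
  have hchoose : ((m + k : ℕ) : ℝ) * (m + k - 1).choose k = m * (k + m).choose m := by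
    exact_mod_cast Nat.add_mul_choose_add_sub_one m k
  rw [Ghier, Nat.add_sub_cancel_left, Ggap_eq_choose_mul_exp_mul_pow]
  linear_combination exp (-a * m * t) * (1 - exp (-a * t)) ^ k * hchoose

theorem hasSum_natCast_add_mul_Ghier_add (m : ℕ) {a t : ℝ} (hat : 0 ≤ a * t) :
    HasSum (fun k : ℕ => ((m + k : ℕ) : ℝ) * Ghier a m (m + k) t) (m * exp (a * t)) := by
  have hnorm : ‖1 - exp (-a * t)‖ < 1 := by
    have hexp_le : exp (-a * t) ≤ 1 := exp_le_one_iff.mpr (by linarith)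
    rw [norm_of_nonneg (by linarith), sub_lt_self_iff]
    exact exp_pos _
  have hsum := (hasSum_choose_mul_geometric_of_norm_lt_one m hnorm).mul_left (m * exp (-a * m * t))
  have hvalue : m * exp (-a * m * t) * (1 / (1 - (1 - exp (-a * t))) ^ (m + 1))
      = m * exp (a * t) := by
    rw [sub_sub_cancel, ← exp_nat_mul, one_div, ← exp_neg, mul_assoc, ← exp_add]
    push_cast
    ring_nf
  rw [hvalue] at hsum
  simpa only [natCast_add_mul_Ghier_add] using hsum

theorem sum_mul_Ghier_le_general (a : ℝ) (ha : 1 ≤ a) (m : ℕ) (t : ℝ) (ht : 0 ≤ t) :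
    Summable (fun k : ℕ => ((m + k : ℕ) : ℝ) * Ghier a m (m + k) t) ∧
      ∑' k : ℕ, ((m + k : ℕ) : ℝ) * Ghier a m (m + k) t
        ≤ (m : ℝ) * a * Real.exp (a * t) := by
  have hsum := hasSum_natCast_add_mul_Ghier_add m (a := a) (mul_nonneg (by linarith) ht)
  refine ⟨hsum.summable, hsum.tsum_eq.le.trans ?_⟩
  rw [mul_assoc]
  exact mul_le_mul_of_nonneg_left (le_mul_of_one_le_left (exp_pos _).le ha) m.cast_nonneg

/-- The series `∑_{ℓ=m}^∞ ℓ·G_m^ℓ(t)` converges and is bounded by `m·a·e^{at}`. -/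
theorem sum_mul_Ghier_le (a : ℝ) (ha : 1 ≤ a) (m : ℕ) (hm : 1 ≤ m) (t : ℝ) (ht : 0 ≤ t) :
    Summable (fun k : ℕ => ((m + k : ℕ) : ℝ) * Ghier a m (m + k) t) ∧
      ∑' k : ℕ, ((m + k : ℕ) : ℝ) * Ghier a m (m + k) t
        ≤ (m : ℝ) * a * Real.exp (a * t) :=
  sum_mul_Ghier_le_general a ha m t ht
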